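/- arXiv:2208.09154 — 5 statements merged into one kernel-verified Lean document; each statement's English description precedes it below -/
import Mathlib

section
/- SO₂(G) = m·(Δ² − δ²)/(Δ² + δ²) holds if and only if max{d(u),d(v)}/min{d(u),d(v)} = Δ/δ for every edge uv ∈ E(G). -/
open Finset

variable {V : Type*}

/-- The second Sombor index of a simple graph. -/
noncomputable def SO2 [Fintype V] [DecidableEq V] (G : SimpleGraph V) [DecidableRel G.Adj] : ℝ :=
  ∑ e ∈ G.edgeFinset,
    Sym2.lift ⟨fun u v =>
        |((G.degree u : ℝ)^2 - (G.degree v : ℝ)^2)| / ((G.degree u : ℝ)^2 + (G.degree v : ℝ)^2),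
      fun u v => by simp only []; rw [abs_sub_comm, add_comm]⟩ e

/-- `mij G i j` is the number of edges whose endpoint degrees are `i` and `j`. -/
def mij [Fintype V] [DecidableEq V] (G : SimpleGraph V) [DecidableRel G.Adj] (i j : ℕ) : ℕ :=
  (G.edgeFinset.filter (fun e => Sym2.map (fun v => G.degree v) e = s(i, j))).card

/-- `nd G i` is the number of vertices of degree `i`. -/
def nd [Fintype V] [DecidableEq V] (G : SimpleGraph V) [DecidableRel G.Adj] (i : ℕ) : ℕ :=
  (Finset.univ.filter (fun v => G.degree v = i)).card

/-! The contribution of an edge `uv` to `SO₂` is `g t = (t² - 1) / (t² + 1)` with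
`t = max (d u, d v) / min (d u, d v) ∈ [1, Δ/δ]`. Since `g` is strictly increasing on `[0, ∞)`,
each term is at most `g (Δ/δ)`, so the sum equals `m · g (Δ/δ)` exactly when every edge has
`t = Δ/δ`. -/

noncomputable def so2Profile (t : ℝ) : ℝ := (t ^ 2 - 1) / (t ^ 2 + 1)

lemma strictMonoOn_so2Profile : StrictMonoOn so2Profile (Set.Ici 0) := by
  intro s hs t _ hst
  have hs : 0 ≤ s := hs
  unfold so2Profile
  rw [div_lt_div_iff₀ (by positivity) (by positivity)]
  nlinarith [mul_lt_mul_of_nonneg_of_pos hst hst.le hs (hs.trans_lt hst)]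

lemma sq_sub_sq_div_sq_add_sq_eq_so2Profile {a b : ℝ} (hb : b ≠ 0) :
    (a ^ 2 - b ^ 2) / (a ^ 2 + b ^ 2) = so2Profile (a / b) := by
  unfold so2Profile
  field_simp

lemma abs_sq_sub_sq_div_sq_add_sq_eq_so2Profile {x y : ℝ} (hx : 0 ≤ x) (hy : 0 ≤ y)
    (hxy : min x y ≠ 0) :
    |x ^ 2 - y ^ 2| / (x ^ 2 + y ^ 2) = so2Profile (max x y / min x y) := by
  rcases le_total y x with h | h
  · rw [max_eq_left h, min_eq_right h] at *
    rw [abs_of_nonneg (by nlinarith), sq_sub_sq_div_sq_add_sq_eq_so2Profile hxy]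
  · rw [max_eq_right h, min_eq_left h] at *
    rw [abs_of_nonpos (by nlinarith), neg_sub, add_comm,
      sq_sub_sq_div_sq_add_sq_eq_so2Profile hxy]

lemma sum_sym2Lift_edgeFinset_eq_card_mul_iff {W : Type*} {H : SimpleGraph W}
    [Fintype H.edgeSet] (f : W → W → ℝ) (hf : ∀ a b, f a b = f b a) (c : ℝ)
    (hle : ∀ u v, H.Adj u v → f u v ≤ c) :
    ∑ e ∈ H.edgeFinset, Sym2.lift ⟨f, hf⟩ e = #H.edgeFinset * c ↔
      ∀ u v, H.Adj u v → f u v = c := by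
  have hle' : ∀ e ∈ H.edgeFinset, Sym2.lift ⟨f, hf⟩ e ≤ c := by
    rintro ⟨u, v⟩ he
    exact hle u v (SimpleGraph.mem_edgeFinset.mp he)
  rw [← nsmul_eq_mul, ← sum_const, sum_eq_sum_iff_of_le hle']
  refine ⟨fun h u v huv => h s(u, v) (SimpleGraph.mem_edgeFinset.mpr huv), ?_⟩
  rintro h ⟨u, v⟩ he
  exact h u v (SimpleGraph.mem_edgeFinset.mp he)

section Degrees

variable [Fintype V] (G : SimpleGraph V) [DecidableRel G.Adj]

lemma cast_minDegree_le_min_degree (u v : V) :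
    (G.minDegree : ℝ) ≤ min (G.degree u : ℝ) (G.degree v) :=
  le_min (by exact_mod_cast G.minDegree_le_degree u) (by exact_mod_cast G.minDegree_le_degree v)

lemma max_degree_div_min_degree_le (hd : 1 ≤ G.minDegree) (u v : V) :
    (max (G.degree u) (G.degree v) : ℝ) / (min (G.degree u) (G.degree v) : ℝ)
      ≤ (G.maxDegree : ℝ) / (G.minDegree : ℝ) := by
  gcongr
  · exact max_le (by exact_mod_cast G.degree_le_maxDegree u)
      (by exact_mod_cast G.degree_le_maxDegree v)
  · exact cast_minDegree_le_min_degree G u v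

lemma abs_degree_sq_sub_div_eq_so2Profile (hd : 1 ≤ G.minDegree) (u v : V) :
    |(G.degree u : ℝ) ^ 2 - (G.degree v : ℝ) ^ 2| / ((G.degree u : ℝ) ^ 2 + (G.degree v : ℝ) ^ 2)
      = so2Profile ((max (G.degree u) (G.degree v) : ℝ) / (min (G.degree u) (G.degree v) : ℝ)) :=
  abs_sq_sub_sq_div_sq_add_sq_eq_so2Profile (Nat.cast_nonneg _) (Nat.cast_nonneg _)
    ((zero_lt_one.trans_le (by exact_mod_cast hd)).trans_le (cast_minDegree_le_min_degree G u v)).ne'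

end Degrees

theorem stmt2 [Fintype V] [DecidableEq V] (G : SimpleGraph V) [DecidableRel G.Adj]
    (hd : 1 ≤ G.minDegree) :
    SO2 G = (G.edgeFinset.card : ℝ) *
        ((G.maxDegree : ℝ)^2 - (G.minDegree : ℝ)^2) / ((G.maxDegree : ℝ)^2 + (G.minDegree : ℝ)^2)
      ↔ ∀ u v : V, G.Adj u v →
        (max (G.degree u) (G.degree v) : ℝ) / (min (G.degree u) (G.degree v) : ℝ)
          = (G.maxDegree : ℝ) / (G.minDegree : ℝ) := by
  have hδ : (G.minDegree : ℝ) ≠ 0 := by exact_mod_cast (by omega : G.minDegree ≠ 0)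
  have hΔδ : (0 : ℝ) ≤ G.maxDegree / G.minDegree := by positivity
  have hterm := abs_degree_sq_sub_div_eq_so2Profile G hd
  rw [mul_div_assoc, sq_sub_sq_div_sq_add_sq_eq_so2Profile hδ, SO2,
    sum_sym2Lift_edgeFinset_eq_card_mul_iff]
  · refine forall₂_congr fun u v => imp_congr_right fun _ => ?_
    rw [hterm, strictMonoOn_so2Profile.eq_iff_eq (Set.mem_Ici.mpr (by positivity)) hΔδ]
  · intro u v _
    rw [hterm, strictMonoOn_so2Profile.le_iff_le (Set.mem_Ici.mpr (by positivity)) hΔδ]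
    exact max_degree_div_min_degree_le G hd u v
end

section
/- For any tree T with n > 1 vertices, SO₂(T) ≤ (n² − 2n)(n − 1)/(n² − 2n + 2), with equality if and only if T is the star S_n. -/
open Finset

variable {V : Type*}

/-- The star graph on `n+1` vertices with center `0`. -/
def starGraph (n : ℕ) : SimpleGraph (Fin (n+1)) where
  Adj u v := u ≠ v ∧ (u = 0 ∨ v = 0)
  symm := ⟨fun u v h => ⟨h.1.symm, h.2.symm⟩⟩
  loopless := ⟨fun u h => h.1 rfl⟩

lemma aux_le {x y M : ℝ} (hx1 : 1 ≤ x) (hxM : x ≤ M) (hy1 : 1 ≤ y) (hyM : y ≤ M) :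
    |x^2 - y^2| / (x^2 + y^2) ≤ (M^2 - 1) / (M^2 + 1) := by
  have hM : 1 ≤ M := le_trans hx1 hxM
  have hd1 : (0:ℝ) < x^2 + y^2 := by positivity
  have hd2 : (0:ℝ) < M^2 + 1 := by positivity
  rw [div_le_div_iff₀ hd1 hd2]
  have h1 : x ≤ M * y := by nlinarith
  have h2 : y ≤ M * x := by nlinarith
  have h1' : x^2 ≤ (M*y)^2 := by nlinarith
  have h2' : y^2 ≤ (M*x)^2 := by nlinarith
  rcases abs_cases (x^2 - y^2) with ⟨h, _⟩ | ⟨h, _⟩ <;> rw [h] <;> nlinarith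

lemma aux_eq {x y M : ℝ} (hx1 : 1 ≤ x) (hxM : x ≤ M) (hy1 : 1 ≤ y) (hyM : y ≤ M) :
    |x^2 - y^2| / (x^2 + y^2) = (M^2 - 1) / (M^2 + 1) ↔
      (x = 1 ∧ y = M) ∨ (x = M ∧ y = 1) := by
  have hM : 1 ≤ M := le_trans hx1 hxM
  have hd1 : (0:ℝ) < x^2 + y^2 := by positivity
  have hd2 : (0:ℝ) < M^2 + 1 := by positivity
  constructor
  · intro h
    rw [div_eq_div_iff hd1.ne' hd2.ne'] at h
    rcases le_total y x with hyx | hxy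
    · have habs : |x^2 - y^2| = x^2 - y^2 := abs_of_nonneg (by nlinarith)
      rw [habs] at h
      have hsq : x^2 = (M*y)^2 := by nlinarith
      have hx' : x = M*y := by
        nlinarith [sq_nonneg (x - M*y), sq_nonneg (x + M*y)]
      have hy' : y = 1 := by nlinarith
      exact Or.inr ⟨by rw [hx', hy', mul_one], hy'⟩
    · have habs : |x^2 - y^2| = -(x^2 - y^2) := abs_of_nonpos (by nlinarith)
      rw [habs] at h
      have hx' : y = M*x := by
        nlinarith [sq_nonneg (y - M*x), sq_nonneg (y + M*x)]
      have hy' : x = 1 := by nlinarith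
      exact Or.inl ⟨hy', by rw [hx', hy', mul_one]⟩
  · rintro (⟨rfl, rfl⟩ | ⟨rfl, rfl⟩)
    · rw [abs_of_nonpos (by nlinarith)]; ring_nf
    · rw [abs_of_nonneg (by nlinarith)]; ring_nf

lemma deg_pos [Fintype V] [DecidableEq V] (T : SimpleGraph V) [DecidableRel T.Adj]
    (hc : T.Connected) (h : 1 < Fintype.card V) (v : V) : 0 < T.degree v := by
  obtain ⟨w, hw⟩ := Fintype.exists_ne_of_one_lt_card h v
  obtain ⟨p⟩ := hc.preconnected v w
  rw [SimpleGraph.degree_pos_iff_exists_adj]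
  cases p with
  | nil => exact absurd rfl hw
  | cons h' p' => exact ⟨_, h'⟩

lemma star_iso [Fintype V] [DecidableEq V] (T : SimpleGraph V) [DecidableRel T.Adj]
    (n : ℕ) (hn : n = Fintype.card V) (h1 : 1 < n) (v0 : V)
    (hstar : ∀ u v : V, T.Adj u v ↔ u ≠ v ∧ (u = v0 ∨ v = v0)) :
    Nonempty (T ≃g starGraph (n-1)) := by
  have hcard : Fintype.card V = (n-1)+1 := by omega
  let e0 : V ≃ Fin ((n-1)+1) := Fintype.equivFinOfCardEq hcard
  let e1 := e0.trans (Equiv.swap (e0 v0) 0)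
  have h0 : e1 v0 = 0 := by simp [e1, Equiv.swap_apply_left]
  refine ⟨⟨e1, ?_⟩⟩
  intro a b
  show (e1 a ≠ e1 b ∧ (e1 a = 0 ∨ e1 b = 0)) ↔ T.Adj a b
  rw [hstar, ← h0, Equiv.apply_eq_iff_eq, Equiv.apply_eq_iff_eq, ne_eq,
    Equiv.apply_eq_iff_eq]

lemma iso_star [Fintype V] [DecidableEq V] (T : SimpleGraph V) [DecidableRel T.Adj]
    (n : ℕ) (φ : T ≃g starGraph (n-1)) :
    ∀ u v : V, T.Adj u v ↔ u ≠ v ∧ (u = φ.symm 0 ∨ v = φ.symm 0) := by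
  intro u v
  have key : ∀ u : V, u = φ.symm 0 ↔ φ u = 0 := by
    intro x
    constructor
    · rintro rfl; exact φ.apply_symm_apply 0
    · intro h; rw [← h]; exact (φ.symm_apply_apply x).symm
  rw [← φ.map_rel_iff]
  show (φ u ≠ φ v ∧ (φ u = 0 ∨ φ v = 0)) ↔ _
  rw [ne_eq, EmbeddingLike.apply_eq_iff_eq, key, key]

lemma star_degrees [Fintype V] [DecidableEq V] (T : SimpleGraph V) [DecidableRel T.Adj]
    (n : ℕ) (hn : n = Fintype.card V) (v0 : V)
    (hstar : ∀ u v : V, T.Adj u v ↔ u ≠ v ∧ (u = v0 ∨ v = v0)) :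
    T.degree v0 = n - 1 ∧ ∀ w, w ≠ v0 → T.degree w = 1 := by
  constructor
  · have : T.neighborFinset v0 = univ.erase v0 := by
      ext w
      simp [SimpleGraph.mem_neighborFinset, hstar, ne_comm]
    rw [← SimpleGraph.card_neighborFinset_eq_degree, this, card_erase_of_mem (mem_univ _),
      card_univ, hn]
  · intro w hw
    have : T.neighborFinset w = {v0} := by
      ext x
      simp only [SimpleGraph.mem_neighborFinset, hstar, mem_singleton]
      constructor
      · rintro ⟨h', h'' | h''⟩
        · exact absurd h'' hw
        · exact h''
      · rintro rfl; exact ⟨hw, Or.inr rfl⟩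
    rw [← SimpleGraph.card_neighborFinset_eq_degree, this, card_singleton]

theorem stmt4 [Fintype V] [DecidableEq V] (T : SimpleGraph V) [DecidableRel T.Adj]
    (hT : T.IsTree) (n : ℕ) (hn : n = Fintype.card V) (h1 : 1 < n) :
    SO2 T ≤ ((n : ℝ)^2 - 2 * n) * ((n : ℝ) - 1) / ((n : ℝ)^2 - 2 * n + 2) ∧
      (SO2 T = ((n : ℝ)^2 - 2 * n) * ((n : ℝ) - 1) / ((n : ℝ)^2 - 2 * n + 2) ↔
        Nonempty (T ≃g starGraph (n - 1))) := by
  have hn2 : (2:ℝ) ≤ (n:ℝ) := by exact_mod_cast h1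
  set M : ℝ := (n:ℝ) - 1 with hMdef
  set c : ℝ := (M^2 - 1) / (M^2 + 1) with hcdef
  have hM1 : 1 ≤ M := by simp only [hMdef]; linarith
  have hMcast : ((n-1:ℕ):ℝ) = M := by
    rw [hMdef, Nat.cast_sub h1.le, Nat.cast_one]
  have hRHS : ((n : ℝ)^2 - 2 * n) * ((n : ℝ) - 1) / ((n : ℝ)^2 - 2 * n + 2)
      = ((n-1:ℕ):ℝ) * c := by
    rw [hMcast, hcdef, hMdef]
    have hd : ((n:ℝ) - 1)^2 + 1 ≠ 0 := by positivity
    have hd' : (n:ℝ)^2 - 2*n + 2 ≠ 0 := by nlinarith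
    rw [eq_comm, mul_div_assoc', div_eq_div_iff hd hd']
    ring
  have hD1 : ∀ v : V, (1:ℝ) ≤ (T.degree v : ℝ) := by
    intro v
    have := deg_pos T hT.isConnected (by omega) v
    exact_mod_cast this
  have hDM : ∀ v : V, (T.degree v : ℝ) ≤ M := by
    intro v
    have := T.degree_lt_card_verts v
    rw [← hMcast]
    have : T.degree v ≤ n - 1 := by omega
    exact_mod_cast this
  have hec : T.edgeFinset.card = n - 1 := by
    have := hT.card_edgeFinset
    omega
  have hle : ∀ e ∈ T.edgeFinset, (Sym2.lift ⟨fun u v =>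
        |((T.degree u : ℝ)^2 - (T.degree v : ℝ)^2)| / ((T.degree u : ℝ)^2 + (T.degree v : ℝ)^2),
      fun u v => by simp only []; rw [abs_sub_comm, add_comm]⟩ e) ≤ c := by
    intro e
    induction e using Sym2.ind with
    | _ u v =>
      intro _
      rw [Sym2.lift_mk]
      exact aux_le (hD1 u) (hDM u) (hD1 v) (hDM v)
  have hbound : SO2 T ≤ ((n-1:ℕ):ℝ) * c := by
    calc SO2 T ≤ T.edgeFinset.card • c := Finset.sum_le_card_nsmul _ _ _ hle
    _ = ((n-1:ℕ):ℝ) * c := by rw [hec, nsmul_eq_mul]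
  have hsum_of_all : (∀ e ∈ T.edgeFinset, (Sym2.lift ⟨fun u v =>
        |((T.degree u : ℝ)^2 - (T.degree v : ℝ)^2)| / ((T.degree u : ℝ)^2 + (T.degree v : ℝ)^2),
      fun u v => by simp only []; rw [abs_sub_comm, add_comm]⟩ e) = c) →
      SO2 T = ((n-1:ℕ):ℝ) * c := by
    intro hall
    unfold SO2
    rw [Finset.sum_congr rfl hall, Finset.sum_const, hec, nsmul_eq_mul]
  refine ⟨by rw [hRHS]; exact hbound, ?_⟩
  rw [hRHS]
  constructor
  · intro heq
    have hall : ∀ e ∈ T.edgeFinset, (Sym2.lift ⟨fun u v =>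
        |((T.degree u : ℝ)^2 - (T.degree v : ℝ)^2)| / ((T.degree u : ℝ)^2 + (T.degree v : ℝ)^2),
      fun u v => by simp only []; rw [abs_sub_comm, add_comm]⟩ e) = c := by
      intro e he
      by_contra hne
      have hlt := lt_of_le_of_ne (hle e he) hne
      have hstrict : SO2 T < ∑ _e ∈ T.edgeFinset, c :=
        Finset.sum_lt_sum hle ⟨e, he, hlt⟩
      rw [Finset.sum_const, hec, nsmul_eq_mul] at hstrict
      linarith [heq.ge, hstrict]
    have hpair : ∀ u v : V, T.Adj u v →
        (T.degree u = 1 ∧ T.degree v = n-1) ∨ (T.degree u = n-1 ∧ T.degree v = 1) := by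
      intro u v huv
      have he : s(u,v) ∈ T.edgeFinset := by
        rw [SimpleGraph.mem_edgeFinset, SimpleGraph.mem_edgeSet]; exact huv
      have h' := hall _ he
      rw [Sym2.lift_mk] at h'
      have := (aux_eq (hD1 u) (hDM u) (hD1 v) (hDM v)).mp h'
      rcases this with ⟨ha, hb⟩ | ⟨ha, hb⟩
      · refine Or.inl ⟨?_, ?_⟩
        · exact_mod_cast ha
        · rw [← hMcast] at hb; exact_mod_cast hb
      · refine Or.inr ⟨?_, ?_⟩
        · rw [← hMcast] at ha; exact_mod_cast ha
        · exact_mod_cast hb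
    -- find a vertex of degree n-1
    have hnonempty : T.edgeFinset.Nonempty := by
      rw [← Finset.card_pos, hec]; omega
    obtain ⟨e, he⟩ := hnonempty
    have hv0 : ∃ v0 : V, T.degree v0 = n - 1 := by
      revert he
      induction e using Sym2.ind with
      | _ u v =>
        intro he
        have huv : T.Adj u v := by
          rwa [SimpleGraph.mem_edgeFinset, SimpleGraph.mem_edgeSet] at he
        rcases hpair u v huv with ⟨_, h2⟩ | ⟨h2, _⟩
        · exact ⟨v, h2⟩
        · exact ⟨u, h2⟩
    obtain ⟨v0, hdv0⟩ := hv0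
    have hadj : ∀ w : V, w ≠ v0 → T.Adj v0 w := by
      have hsub : T.neighborFinset v0 ⊆ univ.erase v0 := by
        intro w hw
        rw [SimpleGraph.mem_neighborFinset] at hw
        exact Finset.mem_erase.mpr ⟨hw.ne', mem_univ w⟩
      have heqs : T.neighborFinset v0 = univ.erase v0 := by
        apply Finset.eq_of_subset_of_card_le hsub
        rw [card_erase_of_mem (mem_univ _), card_univ, ← hn,
          SimpleGraph.card_neighborFinset_eq_degree, hdv0]
      intro w hw
      have : w ∈ T.neighborFinset v0 := by
        rw [heqs]; exact Finset.mem_erase.mpr ⟨hw, mem_univ w⟩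
      rwa [SimpleGraph.mem_neighborFinset] at this
    have hstar : ∀ u v : V, T.Adj u v ↔ u ≠ v ∧ (u = v0 ∨ v = v0) := by
      intro u v
      constructor
      · intro huv
        refine ⟨huv.ne, ?_⟩
        by_contra hcon
        push_neg at hcon
        obtain ⟨hu, hv⟩ := hcon
        have hadju : T.Adj v0 u := hadj u hu
        have hdu : T.degree u = 1 := by
          rcases hpair v0 u hadju with ⟨ha, hb⟩ | ⟨ha, hb⟩ <;> omega
        have hsub2 : ({v0, v} : Finset V) ⊆ T.neighborFinset u := by
          intro x hx
          rw [Finset.mem_insert, Finset.mem_singleton] at hx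
          rw [SimpleGraph.mem_neighborFinset]
          rcases hx with rfl | rfl
          · exact hadju.symm
          · exact huv
        have hcards := Finset.card_le_card hsub2
        rw [Finset.card_pair (Ne.symm hv), SimpleGraph.card_neighborFinset_eq_degree, hdu]
          at hcards
        omega
      · rintro ⟨hne', h | h⟩
        · subst h; exact hadj v (Ne.symm hne')
        · subst h; exact (hadj u hne').symm
    exact star_iso T n hn h1 v0 hstar
  · rintro ⟨φ⟩
    have hstar := iso_star T n φ
    set v0 := φ.symm 0
    obtain ⟨hdv0, hdw⟩ := star_degrees T n hn v0 hstar
    apply hsum_of_all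
    intro e
    induction e using Sym2.ind with
    | _ u v =>
      intro he
      have huv : T.Adj u v := by
        rwa [SimpleGraph.mem_edgeFinset, SimpleGraph.mem_edgeSet] at he
      rw [Sym2.lift_mk]
      apply (aux_eq (hD1 u) (hDM u) (hD1 v) (hDM v)).mpr
      rcases (hstar u v).mp huv with ⟨hne', h | h⟩
      · refine Or.inr ⟨?_, ?_⟩
        · rw [← hMcast]; subst h
          exact_mod_cast congrArg (Nat.cast : ℕ → ℝ) hdv0
        · have : T.degree v = 1 := hdw v (by rw [← h]; exact (Ne.symm hne'))
          exact_mod_cast this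
      · refine Or.inl ⟨?_, ?_⟩
        · have : T.degree u = 1 := hdw u (by rw [← h]; exact hne')
          exact_mod_cast this
        · rw [← hMcast]; subst h
          exact_mod_cast congrArg (Nat.cast : ℕ → ℝ) hdv0
end

section
/- For any molecular tree T with n ≥ 5 vertices and n ≡ 1 (mod 4), SO₂(T) ≤ (126n − 30)/170, with equality if and only if T has no vertex of degree 3, every vertex of degree 2 is adjacent to two vertices of degree 4, and no two vertices of degree 4 are adjacent (equivalently m₁₄ = (n+3)/2, m₂₄ = (n−5)/2 and all other m_{ij} vanish). -/
/-! A tree with `n ≥ 2` vertices satisfies `n = ∑_{uv ∈ E} (1/d(u) + 1/d(v))` and `n - 1 = |E|`,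
so the bound `(126n - 30)/170` is itself a sum over the edges of `(96 (1/d(u) + 1/d(v)) + 30)/170`.
Subtracting the SO₂ term of each edge leaves `so2Gap` of its pair of endpoint degrees, which for
degrees in `[1, 4]` is nonnegative and vanishes exactly on the pairs `{1, 4}` and `{2, 4}`. Equality
thus means that every edge has type `{1, 4}` or `{2, 4}`, and then the two counting identities force
`m₁₄ = (n + 3)/2` and `m₂₄ = (n - 5)/2`. -/

open Finset

variable {V : Type*}

noncomputable def so2Weight : Sym2 ℕ → ℝ :=
  Sym2.lift ⟨fun a b => |(a : ℝ) ^ 2 - (b : ℝ) ^ 2| / ((a : ℝ) ^ 2 + (b : ℝ) ^ 2),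
    fun _ _ => by dsimp only; rw [abs_sub_comm, add_comm]⟩

noncomputable def invSum : Sym2 ℕ → ℝ :=
  Sym2.lift ⟨fun a b => (a : ℝ)⁻¹ + (b : ℝ)⁻¹, fun _ _ => add_comm _ _⟩

noncomputable def so2Gap (t : Sym2 ℕ) : ℝ :=
  (96 * invSum t + 30) / 170 - so2Weight t

lemma so2Gap_nonneg {t : Sym2 ℕ} (ht : ∀ a ∈ t, a ∈ Icc 1 4) : 0 ≤ so2Gap t := by
  induction t using Sym2.ind with
  | _ a b =>
    obtain ⟨ha1, ha4⟩ := mem_Icc.mp (ht a (Sym2.mem_mk_left a b))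
    obtain ⟨hb1, hb4⟩ := mem_Icc.mp (ht b (Sym2.mem_mk_right a b))
    interval_cases a <;> interval_cases b <;> norm_num [so2Gap, so2Weight, invSum]

lemma so2Gap_eq_zero_iff {t : Sym2 ℕ} (ht : ∀ a ∈ t, a ∈ Icc 1 4) :
    so2Gap t = 0 ↔ t = s(1, 4) ∨ t = s(2, 4) := by
  induction t using Sym2.ind with
  | _ a b =>
    obtain ⟨ha1, ha4⟩ := mem_Icc.mp (ht a (Sym2.mem_mk_left a b))
    obtain ⟨hb1, hb4⟩ := mem_Icc.mp (ht b (Sym2.mem_mk_right a b))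
    interval_cases a <;> interval_cases b <;> norm_num [so2Gap, so2Weight, invSum]

namespace SimpleGraph

variable [Fintype V] (G : SimpleGraph V) [DecidableRel G.Adj]

def edgeType (e : Sym2 V) : Sym2 ℕ := e.map fun v => G.degree v

lemma forall_mem_edgeType {P : ℕ → Prop} (h : ∀ v, P (G.degree v)) (e : Sym2 V) :
    ∀ a ∈ G.edgeType e, P a := by
  intro a ha
  obtain ⟨v, -, rfl⟩ := Sym2.mem_map.mp ha
  exact h v

lemma IsTree.degree_pos [Nontrivial V] {G : SimpleGraph V} [DecidableRel G.Adj] (hT : G.IsTree)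
    (v : V) : 0 < G.degree v :=
  hT.connected.preconnected.degree_pos_of_nontrivial v

variable [DecidableEq V]

lemma SO2_eq_sum_so2Weight : SO2 G = ∑ e ∈ G.edgeFinset, so2Weight (G.edgeType e) :=
  Finset.sum_congr rfl fun e _ => by induction e using Sym2.ind; rfl

lemma mij_eq_card_filter_edgeType (i j : ℕ) :
    mij G i j = #{e ∈ G.edgeFinset | G.edgeType e = s(i, j)} := rfl

lemma mij_eq_zero_iff {i j : ℕ} : mij G i j = 0 ↔ ∀ e ∈ G.edgeFinset, G.edgeType e ≠ s(i, j) := by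
  rw [mij_eq_card_filter_edgeType, Finset.card_eq_zero, Finset.filter_eq_empty_iff]

lemma mij_add_mij_eq_card_edgeFinset_iff {i j k l : ℕ} (hne : s(i, j) ≠ s(k, l)) :
    mij G i j + mij G k l = #G.edgeFinset ↔
      ∀ e ∈ G.edgeFinset, G.edgeType e = s(i, j) ∨ G.edgeType e = s(k, l) := by
  rw [mij_eq_card_filter_edgeType, mij_eq_card_filter_edgeType,
    ← Finset.card_union_of_disjoint, ← Finset.filter_or, Finset.card_filter_eq_iff]
  exact Finset.disjoint_filter.mpr fun e _ h1 h2 => hne (h1.symm.trans h2)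

lemma sum_filter_edgeType_eq {M : Type*} [AddCommMonoid M] (f : Sym2 ℕ → M) (i j : ℕ) :
    ∑ e ∈ G.edgeFinset with G.edgeType e = s(i, j), f (G.edgeType e) = mij G i j • f s(i, j) := by
  rw [Finset.sum_congr rfl fun e he => by rw [(Finset.mem_filter.mp he).2], Finset.sum_const,
    mij_eq_card_filter_edgeType]

lemma sum_edgeType_of_forall {i j k l : ℕ} (hne : s(i, j) ≠ s(k, l))
    (h : ∀ e ∈ G.edgeFinset, G.edgeType e = s(i, j) ∨ G.edgeType e = s(k, l))
    {M : Type*} [AddCommMonoid M] (f : Sym2 ℕ → M) :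
    ∑ e ∈ G.edgeFinset, f (G.edgeType e) = mij G i j • f s(i, j) + mij G k l • f s(k, l) := by
  have hrest : {e ∈ G.edgeFinset | ¬G.edgeType e = s(i, j)} =
      {e ∈ G.edgeFinset | G.edgeType e = s(k, l)} :=
    Finset.filter_congr fun e he => ⟨(h e he).resolve_left, fun hkl hij => hne (hij.symm.trans hkl)⟩
  rw [← Finset.sum_filter_add_sum_filter_not _ (fun e => G.edgeType e = s(i, j)), hrest,
    sum_filter_edgeType_eq, sum_filter_edgeType_eq]

lemma sum_edgeFinset_sum_mem {M : Type*} [AddCommMonoid M] (g : V → M) :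
    ∑ e ∈ G.edgeFinset, ∑ v with v ∈ e, g v = ∑ v, G.degree v • g v := by
  simp_rw [Finset.sum_filter]
  rw [Finset.sum_comm]
  refine Finset.sum_congr rfl fun v _ => ?_
  rw [← Finset.sum_filter, ← incidenceFinset_eq_filter, Finset.sum_const,
    card_incidenceFinset_eq_degree]

lemma invSum_edgeType {e : Sym2 V} (he : e ∈ G.edgeFinset) :
    invSum (G.edgeType e) = ∑ v with v ∈ e, ((G.degree v : ℝ))⁻¹ := by
  induction e using Sym2.ind with
  | _ u w =>
    have huw : u ≠ w := (G.mem_edgeFinset.mp he).ne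
    rw [show ({v | v ∈ s(u, w)} : Finset V) = {u, w} by ext; simp, Finset.sum_pair huw]
    rfl

lemma sum_invSum_edgeType (h : ∀ v, G.degree v ≠ 0) :
    ∑ e ∈ G.edgeFinset, invSum (G.edgeType e) = Fintype.card V := by
  rw [Finset.sum_congr rfl fun e he => G.invSum_edgeType he, sum_edgeFinset_sum_mem]
  simp [h]

variable {G}

lemma IsTree.sub_SO2_eq_sum_so2Gap [Nontrivial V] (hT : G.IsTree) :
    (126 * (Fintype.card V : ℝ) - 30) / 170 - SO2 G = ∑ e ∈ G.edgeFinset, so2Gap (G.edgeType e) := by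
  have hE : (#G.edgeFinset : ℝ) + 1 = Fintype.card V := by exact_mod_cast hT.card_edgeFinset
  have hinv := G.sum_invSum_edgeType fun v => (hT.degree_pos v).ne'
  simp only [so2Gap, Finset.sum_sub_distrib, ← Finset.sum_div, Finset.sum_add_distrib,
    ← Finset.mul_sum, hinv, SO2_eq_sum_so2Weight, Finset.sum_const, nsmul_eq_mul]
  rw [← hE]
  ring

lemma IsTree.forall_edgeType_eq_or_iff [Nontrivial V] (hT : G.IsTree)
    (hodd : Fintype.card V % 2 = 1) (h5 : 5 ≤ Fintype.card V) :
    (∀ e ∈ G.edgeFinset, G.edgeType e = s(1, 4) ∨ G.edgeType e = s(2, 4)) ↔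
      (mij G 1 4 = (Fintype.card V + 3) / 2 ∧ mij G 2 4 = (Fintype.card V - 5) / 2 ∧
        mij G 1 2 = 0 ∧ mij G 1 3 = 0 ∧ mij G 2 2 = 0 ∧ mij G 2 3 = 0 ∧ mij G 3 3 = 0 ∧
        mij G 3 4 = 0 ∧ mij G 4 4 = 0) := by
  have hE := hT.card_edgeFinset
  constructor
  · intro hall
    have hcard := (G.mij_add_mij_eq_card_edgeFinset_iff (by decide)).mpr hall
    have hinv := G.sum_edgeType_of_forall (by decide) hall invSum
    rw [G.sum_invSum_edgeType fun v => (hT.degree_pos v).ne'] at hinv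
    norm_num [invSum] at hinv
    have h14 : 2 * mij G 1 4 = Fintype.card V + 3 := by
      have : (#G.edgeFinset : ℝ) + 1 = Fintype.card V := by exact_mod_cast hE
      have : (mij G 1 4 : ℝ) + mij G 2 4 = #G.edgeFinset := by exact_mod_cast hcard
      exact_mod_cast (by linarith : (2 * mij G 1 4 : ℝ) = Fintype.card V + 3)
    refine ⟨by omega, by omega, ?_⟩
    refine ⟨?_, ?_, ?_, ?_, ?_, ?_, ?_⟩ <;>
      exact G.mij_eq_zero_iff.mpr fun e he => by rcases hall e he with h | h <;> rw [h] <;> decide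
  · rintro ⟨h14, h24, -⟩
    exact (G.mij_add_mij_eq_card_edgeFinset_iff (by decide)).mp (by omega)

end SimpleGraph

theorem stmt10 [Fintype V] [DecidableEq V] (T : SimpleGraph V) [DecidableRel T.Adj]
    (hT : T.IsTree) (hdeg : ∀ v : V, T.degree v ≤ 4) (n : ℕ) (hn : n = Fintype.card V)
    (h5 : 5 ≤ n) (hmod : n % 4 = 1) :
    SO2 T ≤ (126 * (n : ℝ) - 30) / 170 ∧
      (SO2 T = (126 * (n : ℝ) - 30) / 170 ↔
        (mij T 1 4 = (n + 3) / 2 ∧ mij T 2 4 = (n - 5) / 2 ∧ mij T 1 2 = 0 ∧ mij T 1 3 = 0 ∧ mij T 2 2 = 0 ∧ mij T 2 3 = 0 ∧ mij T 3 3 = 0 ∧ mij T 3 4 = 0 ∧ mij T 4 4 = 0)) := by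
  subst hn
  have : Nontrivial V := Fintype.one_lt_card_iff_nontrivial.mp (by omega)
  have hrange : ∀ e, ∀ a ∈ T.edgeType e, a ∈ Icc 1 4 :=
    T.forall_mem_edgeType fun v => mem_Icc.mpr ⟨hT.degree_pos v, hdeg v⟩
  have hnonneg : ∀ e ∈ T.edgeFinset, 0 ≤ so2Gap (T.edgeType e) :=
    fun e _ => so2Gap_nonneg (hrange e)
  have hgap := hT.sub_SO2_eq_sum_so2Gap
  refine ⟨by linarith [Finset.sum_nonneg hnonneg], ?_⟩
  rw [← hT.forall_edgeType_eq_or_iff (by omega) h5, eq_comm, ← sub_eq_zero, hgap,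
    Finset.sum_eq_zero_iff_of_nonneg hnonneg]
  exact forall₂_congr fun e _ => so2Gap_eq_zero_iff (hrange e)
end

section
/- For any molecular tree T with n ≥ 5 vertices and n ≡ 2 (mod 4), SO₂(T) ≤ (126n − 102)/170, with equality if and only if T has no vertex of degree 3, exactly one vertex of degree 2 is adjacent to a vertex of degree 4 and a vertex of degree 1, and all other degree-2 vertices are adjacent to two degree-4 vertices (i.e., m₁₄ = n/2, m₂₄ = (n−4)/2, m₁₂ = 1, all other m_{ij} = 0). -/
open Finset

variable {V : Type*}

noncomputable def Fso : Sym2 ℕ → ℝ :=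
  Sym2.lift ⟨fun a b => |((a:ℝ))^2 - ((b:ℝ))^2| / (((a:ℝ))^2 + ((b:ℝ))^2),
    fun a b => by simp only []; rw [abs_sub_comm, add_comm]⟩

def cnt (i : ℕ) : Sym2 ℕ → ℕ :=
  Sym2.lift ⟨fun a b => (if a = i then 1 else 0) + (if b = i then 1 else 0),
    fun a b => by simp only []; rw [add_comm]⟩

def Pset : Finset (Sym2 ℕ) :=
  {s(1,1), s(1,2), s(1,3), s(1,4), s(2,2), s(2,3), s(2,4), s(3,3), s(3,4), s(4,4)}

lemma fiber_sum {α β M : Type*} [DecidableEq β] [AddCommMonoid M] (s : Finset α) (g : α → β)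
    (t : Finset β) (h : ∀ x ∈ s, g x ∈ t) (F : β → M) :
    ∑ x ∈ s, F (g x) = ∑ y ∈ t, (s.filter (fun x => g x = y)).card • F y := by
  rw [← Finset.sum_fiberwise_of_maps_to h (fun x => F (g x))]
  refine Finset.sum_congr rfl fun y hy => ?_
  rw [Finset.sum_congr rfl (fun x hx => by rw [(Finset.mem_filter.mp hx).2]), Finset.sum_const]

lemma sum_Pset {M : Type*} [AddCommMonoid M] (f : Sym2 ℕ → M) :
    ∑ p ∈ Pset, f p =
      f s(1,1) + f s(1,2) + f s(1,3) + f s(1,4) + f s(2,2) + f s(2,3) + f s(2,4)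
        + f s(3,3) + f s(3,4) + f s(4,4) := by
  rw [show Pset = {s(1,1), s(1,2), s(1,3), s(1,4), s(2,2), s(2,3), s(2,4), s(3,3), s(3,4), s(4,4)} from rfl]
  rw [Finset.sum_insert (by decide), Finset.sum_insert (by decide), Finset.sum_insert (by decide),
    Finset.sum_insert (by decide), Finset.sum_insert (by decide), Finset.sum_insert (by decide),
    Finset.sum_insert (by decide), Finset.sum_insert (by decide), Finset.sum_insert (by decide),
    Finset.sum_singleton]
  abel

section Aux
variable [Fintype V] [DecidableEq V] (T : SimpleGraph V) [DecidableRel T.Adj]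

lemma dart_count_left (i : ℕ) :
    ∑ d : T.Dart, (if T.degree d.fst = i then 1 else 0) = i * nd T i := by
  rw [← Finset.sum_fiberwise_of_maps_to (t := (univ : Finset V))
      (g := fun d : T.Dart => d.fst) (fun _ _ => Finset.mem_univ _)]
  have h1 : ∀ v : V, ∑ d ∈ univ.filter (fun d : T.Dart => d.fst = v),
      (if T.degree d.fst = i then 1 else 0) = if T.degree v = i then T.degree v else 0 := by
    intro v
    rw [Finset.sum_congr rfl (fun d hd => by rw [(Finset.mem_filter.mp hd).2]),
      Finset.sum_const]
    have hc : (univ.filter (fun d : T.Dart => d.fst = v)).card = T.degree v :=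
      T.dart_fst_fiber_card_eq_degree v
    rw [hc, smul_eq_mul]
    split_ifs <;> simp
  rw [Finset.sum_congr rfl fun v _ => h1 v, ← Finset.sum_filter,
    Finset.sum_congr rfl (fun v hv => (Finset.mem_filter.mp hv).2), Finset.sum_const, nd,
    smul_eq_mul, mul_comm]

lemma dart_count_right (i : ℕ) :
    ∑ d : T.Dart, (if T.degree d.fst = i then 1 else 0)
      = ∑ e ∈ T.edgeFinset, cnt i (Sym2.map (fun v => T.degree v) e) := by
  rw [← Finset.sum_fiberwise_of_maps_to (t := T.edgeFinset) (g := fun d : T.Dart => d.edge)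
      (fun d _ => by simp)]
  refine Finset.sum_congr rfl fun e he => ?_
  rw [SimpleGraph.mem_edgeFinset] at he
  induction e using Sym2.ind with
  | _ u v =>
    have hadj : T.Adj u v := he
    have hfib : univ.filter (fun d : T.Dart => d.edge = s(u,v))
        = {SimpleGraph.Dart.mk (u,v) hadj, (SimpleGraph.Dart.mk (u,v) hadj).symm} := by
      have := SimpleGraph.Dart.edge_fiber (SimpleGraph.Dart.mk (u,v) hadj)
      exact Finset.ext fun d' => by
        simpa using SimpleGraph.dart_edge_eq_iff d' (SimpleGraph.Dart.mk (u,v) hadj)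
    rw [hfib, Finset.sum_pair (Ne.symm (SimpleGraph.Dart.symm_ne _))]
    simp [cnt, Sym2.map_pair_eq, SimpleGraph.Dart.symm]
    split_ifs <;> rfl

lemma so2_eq : SO2 T = ∑ e ∈ T.edgeFinset, Fso (Sym2.map (fun v => T.degree v) e) := by
  refine Finset.sum_congr rfl fun e he => ?_
  induction e using Sym2.ind with
  | _ u v => simp [Fso, Sym2.map_pair_eq]

lemma Fso_eval (a b : ℕ) (h : a ≤ b) :
    Fso s(a,b) = (((b:ℝ))^2 - ((a:ℝ))^2) / (((a:ℝ))^2 + ((b:ℝ))^2) := by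
  rw [Fso, Sym2.lift_mk]
  show |((a:ℝ))^2 - ((b:ℝ))^2| / (((a:ℝ))^2 + ((b:ℝ))^2) = _
  have hab : ((a:ℝ)) ≤ (b:ℝ) := by exact_mod_cast h
  have h0 : (0:ℝ) ≤ (a:ℝ) := by positivity
  rw [abs_sub_comm, abs_of_nonneg (by nlinarith : (0:ℝ) ≤ ((b:ℝ))^2 - ((a:ℝ))^2)]

lemma deg_ge_one (hT : T.Connected) (hcard : 2 ≤ Fintype.card V) (v : V) : 1 ≤ T.degree v := by
  obtain ⟨w, hw⟩ := Fintype.exists_ne_of_one_lt_card (by omega) v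
  obtain ⟨p⟩ := hT.preconnected v w
  cases p with
  | nil => exact absurd rfl hw.symm
  | cons ha q =>
    have := (T.degree_pos_iff_exists_adj v).mpr ⟨_, ha⟩
    omega

lemma no_11_edge (hT : T.Connected) (hcard : 3 ≤ Fintype.card V)
    {u v : V} (huv : T.Adj u v) (hu : T.degree u = 1) (hv : T.degree v = 1) : False := by
  have hnb : ∀ x w y : V, T.degree x = 1 → T.Adj x w → T.Adj x y → y = w := by
    intro x w y hx hw hy
    have hx' : (T.neighborFinset x).card = 1 := hx
    obtain ⟨a, ha⟩ := Finset.card_eq_one.mp hx'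
    have h1 : w ∈ T.neighborFinset x := (T.mem_neighborFinset x w).mpr hw
    have h2 : y ∈ T.neighborFinset x := (T.mem_neighborFinset x y).mpr hy
    rw [ha, Finset.mem_singleton] at h1 h2
    rw [h1, h2]
  have key : ∀ k : ℕ, ∀ x y : V, (y = u ∨ y = v) → ∀ p : T.Walk y x, p.length ≤ k →
      (x = u ∨ x = v) := by
    intro k
    induction k with
    | zero =>
      intro x y hy p hp
      cases p with
      | nil => exact hy
      | cons ha q => simp [SimpleGraph.Walk.length_cons] at hp
    | succ k ih =>
      intro x y hy p hp
      cases p with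
      | nil => exact hy
      | cons ha q =>
        rcases hy with rfl | rfl
        · exact ih x _ (Or.inr (hnb y v _ hu huv ha)) q
            (by simpa [SimpleGraph.Walk.length_cons] using hp)
        · exact ih x _ (Or.inl (hnb y u _ hv huv.symm ha)) q
            (by simpa [SimpleGraph.Walk.length_cons] using hp)
  have hlt : (({u, v} : Finset V)).card < Fintype.card V := by
    calc (({u, v} : Finset V)).card ≤ 2 := Finset.card_insert_le _ _ |>.trans (by simp)
    _ < Fintype.card V := by omega
  have : (Finset.univ \ ({u, v} : Finset V)).Nonempty := by
    rw [← Finset.card_pos, Finset.card_sdiff_of_subset (Finset.subset_univ _)]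
    have := Finset.card_univ (α := V)
    omega
  obtain ⟨w, hw⟩ := this
  simp only [Finset.mem_sdiff, Finset.mem_univ, Finset.mem_insert, Finset.mem_singleton,
    true_and, not_or] at hw
  obtain ⟨p⟩ := hT.preconnected u w
  rcases key p.length w u (Or.inl rfl) p le_rfl with rfl | rfl
  · exact hw.1 rfl
  · exact hw.2 rfl
set_option maxHeartbeats 2000000 in
theorem star' (m12 m13 m14 m22 m23 m24 m33 m34 m44 : ℕ)
    (hE : 6*m12 + 4*m13 + 3*m14 = 12 + 2*m23 + 3*m24 + 4*m33 + 5*m34 + 6*m44)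
    (h2 : (m12 + m23 + m24) % 2 = 0)
    (h3 : (m13 + m23 + 2*m33 + m34) % 3 = 0)
    (h4 : (m14 + m24 + m34 + 2*m44) % 4 = 0)
    (hs : (m12 + m13 + m14 + m22 + m23 + m24 + m33 + m34 + m44) % 4 = 1) :
    2340*m12 + 715*m13 + 4095*m22 + 1450*m23 + 3055*m33 + 1248*m34 + 2535*m44 ≥ 2340 ∧
    (2340*m12 + 715*m13 + 4095*m22 + 1450*m23 + 3055*m33 + 1248*m34 + 2535*m44 = 2340 ↔
      m12 = 1 ∧ m13 = 0 ∧ m22 = 0 ∧ m23 = 0 ∧ m33 = 0 ∧ m34 = 0 ∧ m44 = 0) := by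
  rcases Nat.lt_or_ge m12 2 with h12 | h12
  case inr => clear hE h2 h3 h4 hs; omega
  rcases Nat.lt_or_ge m13 4 with h13 | h13
  case inr => clear hE h2 h3 h4 hs; omega
  rcases Nat.lt_or_ge m22 1 with h22 | h22
  case inr => clear hE h2 h3 h4 hs; omega
  rcases Nat.lt_or_ge m23 2 with h23 | h23
  case inr => clear hE h2 h3 h4 hs; omega
  rcases Nat.lt_or_ge m33 1 with h33 | h33
  case inr => clear hE h2 h3 h4 hs; omega
  rcases Nat.lt_or_ge m34 2 with h34 | h34
  case inr => clear hE h2 h3 h4 hs; omega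
  rcases Nat.lt_or_ge m44 1 with h44 | h44
  case inr => clear hE h2 h3 h4 hs; omega
  interval_cases m12 <;> interval_cases m13 <;> interval_cases m23 <;> interval_cases m34 <;> omega

set_option maxHeartbeats 2000000 in
theorem keyN (m12 m13 m14 m22 m23 m24 m33 m34 m44 n1 n2 n3 n4 n : ℕ)
    (h1 : m12 + m13 + m14 = n1)
    (h2 : m12 + 2*m22 + m23 + m24 = 2*n2)
    (h3 : m13 + m23 + 2*m33 + m34 = 3*n3)
    (h4 : m14 + m24 + m34 + 2*m44 = 4*n4)
    (hv : n1 + n2 + n3 + n4 = n)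
    (he : m12 + m13 + m14 + m22 + m23 + m24 + m33 + m34 + m44 = n - 1)
    (h5 : 5 ≤ n) (hmod : n % 4 = 2) :
    3315*m12 + 4420*m13 + 4875*m14 + 2125*m23 + 3315*m24 + 1547*m34 ≤ 4095*n - 3315 ∧
    (3315*m12 + 4420*m13 + 4875*m14 + 2125*m23 + 3315*m24 + 1547*m34 = 4095*n - 3315 ↔
      (m14 = n/2 ∧ m24 = (n-4)/2 ∧ m12 = 1 ∧ m13 = 0 ∧ m22 = 0 ∧ m23 = 0 ∧ m33 = 0 ∧ m34 = 0 ∧ m44 = 0)) := by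
  have hE : 6*m12 + 4*m13 + 3*m14 = 12 + 2*m23 + 3*m24 + 4*m33 + 5*m34 + 6*m44 := by omega
  obtain ⟨hge, hiff⟩ := star' m12 m13 m14 m22 m23 m24 m33 m34 m44 hE (by omega) (by omega) (by omega) (by omega)
  have hlink : 3315*m12 + 4420*m13 + 4875*m14 + 2125*m23 + 3315*m24 + 1547*m34
      + (2340*m12 + 715*m13 + 4095*m22 + 1450*m23 + 3055*m33 + 1248*m34 + 2535*m44) + 975
      = 4095*n := by omega
  constructor
  · omega
  constructor
  · intro heq
    have hst : 2340*m12 + 715*m13 + 4095*m22 + 1450*m23 + 3055*m33 + 1248*m34 + 2535*m44 = 2340 := by omega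
    have := hiff.mp hst
    clear hiff hge hlink heq hst h1 h2 h3 h4 hv
    omega
  · intro ⟨e14, e24, e12, e13, e22, e23, e33, e34, e44⟩
    have hst : 2340*m12 + 715*m13 + 4095*m22 + 1450*m23 + 3055*m33 + 1248*m34 + 2535*m44 = 2340 := by
      subst e12 e13 e22 e23 e33 e34 e44; ring
    omega

lemma cnt_eval (i a b : ℕ) :
    cnt i s(a,b) = (if a = i then 1 else 0) + (if b = i then 1 else 0) := rfl

lemma nd_partition (h1 : ∀ v, 1 ≤ T.degree v) (h4 : ∀ v, T.degree v ≤ 4) :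
    nd T 1 + nd T 2 + nd T 3 + nd T 4 = Fintype.card V := by
  rw [← Finset.card_univ,
    Finset.card_eq_sum_card_fiberwise (f := fun v : V => T.degree v)
      (t := ({1,2,3,4} : Finset ℕ))
      (fun v _ => by
        have := h1 v; have := h4 v
        simp only [Finset.mem_coe, Finset.mem_insert, Finset.mem_singleton]; omega)]
  rw [Finset.sum_insert (by decide), Finset.sum_insert (by decide),
    Finset.sum_insert (by decide), Finset.sum_singleton]
  simp only [nd]
  ring

end Aux

theorem stmt12 [Fintype V] [DecidableEq V] (T : SimpleGraph V) [DecidableRel T.Adj]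
    (hT : T.IsTree) (hdeg : ∀ v : V, T.degree v ≤ 4) (n : ℕ) (hn : n = Fintype.card V)
    (h5 : 5 ≤ n) (hmod : n % 4 = 2) :
    SO2 T ≤ (126 * (n : ℝ) - 102) / 170 ∧
      (SO2 T = (126 * (n : ℝ) - 102) / 170 ↔
        (mij T 1 4 = n / 2 ∧ mij T 2 4 = (n - 4) / 2 ∧ mij T 1 2 = 1 ∧ mij T 1 3 = 0 ∧ mij T 2 2 = 0 ∧ mij T 2 3 = 0 ∧ mij T 3 3 = 0 ∧ mij T 3 4 = 0 ∧ mij T 4 4 = 0)) := by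
  have hconn := hT.isConnected
  have hd1 : ∀ v : V, 1 ≤ T.degree v := fun v => deg_ge_one T hconn (by omega) v
  have hmaps : ∀ e ∈ T.edgeFinset, Sym2.map (fun v => T.degree v) e ∈ Pset := by
    intro e he
    induction e using Sym2.ind with
    | _ u v =>
      rw [Sym2.map_pair_eq]
      have h1u := hd1 u; have h4u := hdeg u
      have h1v := hd1 v; have h4v := hdeg v
      obtain ⟨a, ha⟩ : ∃ a, T.degree u = a := ⟨_, rfl⟩
      obtain ⟨b, hb⟩ : ∃ b, T.degree v = b := ⟨_, rfl⟩
      rw [ha, hb]; rw [ha] at h1u h4u; rw [hb] at h1v h4v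
      interval_cases a <;> interval_cases b <;> decide
  have hm11 : mij T 1 1 = 0 := by
    rw [mij, Finset.card_eq_zero, Finset.filter_eq_empty_iff]
    intro e he
    induction e using Sym2.ind with
    | _ u v =>
      simp only [SimpleGraph.mem_edgeFinset, SimpleGraph.mem_edgeSet] at he
      rw [Sym2.map_pair_eq, Sym2.eq_iff]
      rintro (⟨h1, h2⟩ | ⟨h1, h2⟩) <;>
        exact no_11_edge T hconn (by omega) he h1 h2
  -- edge count
  have hecard : T.edgeFinset.card + 1 = n := by rw [hn]; exact hT.card_edgeFinset
  have hesum := (Finset.card_eq_sum_card_fiberwise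
    (f := fun e => Sym2.map (fun v => T.degree v) e) (t := Pset) hmaps).symm
  rw [sum_Pset] at hesum
  have hmm : ∀ i j : ℕ,
      (T.edgeFinset.filter (fun e => Sym2.map (fun v => T.degree v) e = s(i,j))).card
        = mij T i j := fun i j => rfl
  rw [hmm 1 1, hmm 1 2, hmm 1 3, hmm 1 4, hmm 2 2, hmm 2 3, hmm 2 4, hmm 3 3, hmm 3 4,
    hmm 4 4] at hesum
  have ke : mij T 1 2 + mij T 1 3 + mij T 1 4 + mij T 2 2 + mij T 2 3 + mij T 2 4
      + mij T 3 3 + mij T 3 4 + mij T 4 4 = n - 1 := by omega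
  -- handshakes
  have H : ∀ i : ℕ,
      i * nd T i = mij T 1 1 * cnt i s(1,1) + mij T 1 2 * cnt i s(1,2)
        + mij T 1 3 * cnt i s(1,3) + mij T 1 4 * cnt i s(1,4) + mij T 2 2 * cnt i s(2,2)
        + mij T 2 3 * cnt i s(2,3) + mij T 2 4 * cnt i s(2,4) + mij T 3 3 * cnt i s(3,3)
        + mij T 3 4 * cnt i s(3,4) + mij T 4 4 * cnt i s(4,4) := by
    intro i
    rw [← dart_count_left T i, dart_count_right T i,
      fiber_sum T.edgeFinset _ Pset hmaps (cnt i), sum_Pset]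
    simp only [smul_eq_mul]
    rw [hmm 1 1, hmm 1 2, hmm 1 3, hmm 1 4, hmm 2 2, hmm 2 3, hmm 2 4, hmm 3 3, hmm 3 4,
      hmm 4 4]
  have k1 := H 1; have k2 := H 2; have k3 := H 3; have k4 := H 4
  simp only [cnt_eval] at k1 k2 k3 k4
  norm_num at k1 k2 k3 k4
  have c1 : mij T 1 2 + mij T 1 3 + mij T 1 4 = nd T 1 := by omega
  have c2 : mij T 1 2 + 2*(mij T 2 2) + mij T 2 3 + mij T 2 4 = 2 * nd T 2 := by omega
  have c3 : mij T 1 3 + mij T 2 3 + 2*(mij T 3 3) + mij T 3 4 = 3 * nd T 3 := by omega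
  have c4 : mij T 1 4 + mij T 2 4 + mij T 3 4 + 2*(mij T 4 4) = 4 * nd T 4 := by omega
  have kv : nd T 1 + nd T 2 + nd T 3 + nd T 4 = n := by
    rw [nd_partition T hd1 hdeg, hn]
  -- SO2 formula
  have hso2 : SO2 T = (mij T 1 2 : ℝ) * (3/5) + (mij T 1 3 : ℝ) * (4/5)
      + (mij T 1 4 : ℝ) * (15/17) + (mij T 2 3 : ℝ) * (5/13) + (mij T 2 4 : ℝ) * (3/5)
      + (mij T 3 4 : ℝ) * (7/25) := by
    rw [so2_eq, fiber_sum T.edgeFinset _ Pset hmaps Fso, sum_Pset,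
      hmm 1 1, hmm 1 2, hmm 1 3, hmm 1 4, hmm 2 2, hmm 2 3, hmm 2 4, hmm 3 3, hmm 3 4,
      hmm 4 4,
      Fso_eval 1 1 (by norm_num), Fso_eval 1 2 (by norm_num), Fso_eval 1 3 (by norm_num),
      Fso_eval 1 4 (by norm_num), Fso_eval 2 2 (by norm_num), Fso_eval 2 3 (by norm_num),
      Fso_eval 2 4 (by norm_num), Fso_eval 3 3 (by norm_num), Fso_eval 3 4 (by norm_num),
      Fso_eval 4 4 (by norm_num)]
    simp only [nsmul_eq_mul]
    norm_num
  obtain ⟨hle, hiff⟩ := keyN (mij T 1 2) (mij T 1 3) (mij T 1 4) (mij T 2 2) (mij T 2 3)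
    (mij T 2 4) (mij T 3 3) (mij T 3 4) (mij T 4 4) (nd T 1) (nd T 2) (nd T 3) (nd T 4) n
    c1 c2 c3 c4 kv ke h5 hmod
  have hb : ((4095 * n - 3315 : ℕ) : ℝ) = 4095 * (n:ℝ) - 3315 := by
    have h' : 3315 ≤ 4095 * n := by omega
    push_cast [Nat.cast_sub h']
    ring
  constructor
  · have hle' := (Nat.cast_le (α := ℝ)).mpr hle
    rw [hb] at hle'; push_cast at hle'
    rw [hso2]; linarith
  · constructor
    · intro h
      apply hiff.mp
      have hR : ((3315*(mij T 1 2) + 4420*(mij T 1 3) + 4875*(mij T 1 4) + 2125*(mij T 2 3)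
          + 3315*(mij T 2 4) + 1547*(mij T 3 4) : ℕ) : ℝ) = ((4095*n - 3315 : ℕ) : ℝ) := by
        rw [hb]; push_cast; rw [hso2] at h; linarith
      exact_mod_cast hR
    · intro hconf
      have hNeq := hiff.mpr hconf
      have hR := congrArg (fun k : ℕ => (k:ℝ)) hNeq
      rw [hb] at hR; push_cast at hR
      rw [hso2]; linarith
end

section
/- For any molecular tree T with n ≥ 5 vertices and n ≡ 3 (mod 4), SO₂(T) ≤ (315n − 281)/425, with equality if and only if T has exactly one vertex of degree 3, which is adjacent to two vertices of degree 1 and one vertex of degree 4, and every vertex of degree 2 is adjacent to two vertices of degree 4 (i.e., m₁₄ = (n−1)/2, m₂₄ = (n−7)/2, m₁₃ = 2, m₃₄ = 1, all other m_{ij} = 0). -/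
/-!
Each edge contributes a weight that depends only on the degrees of its ends, so `SO2 T` is a
linear form in the ten counts `mᵢⱼ = mij T i j`, `1 ≤ i ≤ j ≤ 4`. A tree satisfies the linear
relations `∑ mᵢⱼ = n - 1`, `i * nd T i = ∑ⱼ (1 + δᵢⱼ) mᵢⱼ` and `∑ nd T i = n`. Eliminating with
them, `5525 * ((315 n - 281) / 425 - SO2 T) = S - 2678`, where `S` is a combination with positive
coefficients of the eight counts other than `m₁₄` and `m₂₄`. Since `n ≡ 3 (mod 4)` while
`m₁₄ + m₂₄ + m₃₄ + 2 m₄₄ = 4 nd T 4` and `m₁₃ + m₂₃ + 2 m₃₃ + m₃₄ = 3 nd T 3`, the only way to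
keep `S ≤ 2678` is `m₁₃ = 2`, `m₃₄ = 1` and the other six counts zero, where `S = 2678`.
-/

open Finset

variable {V : Type*}

namespace Sym2

variable {α M : Type*} [AddCommMonoid M]

def sum (f : α → M) : Sym2 α → M :=
  Sym2.lift ⟨fun a b => f a + f b, fun _ _ => add_comm _ _⟩

@[simp]
theorem sum_mk (f : α → M) (a b : α) : Sym2.sum f s(a, b) = f a + f b := rfl

theorem sum_map {β : Type*} (f : β → M) (g : α → β) (e : Sym2 α) :
    Sym2.sum f (e.map g) = Sym2.sum (f ∘ g) e := by
  induction e using Sym2.ind with | _ a b => rfl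

end Sym2

def molecularDegreePairs : Finset (Sym2 ℕ) :=
  {s(1, 1), s(1, 2), s(1, 3), s(1, 4), s(2, 2), s(2, 3), s(2, 4), s(3, 3), s(3, 4), s(4, 4)}

theorem mk_mem_molecularDegreePairs {a b : ℕ} (ha : a ∈ Icc 1 4) (hb : b ∈ Icc 1 4) :
    s(a, b) ∈ molecularDegreePairs := by
  obtain ⟨ha1, ha4⟩ := mem_Icc.mp ha
  obtain ⟨hb1, hb4⟩ := mem_Icc.mp hb
  interval_cases a <;> interval_cases b <;> decide

noncomputable def sombor2Weight : Sym2 ℕ → ℝ :=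
  Sym2.lift ⟨fun i j => |((i : ℝ) ^ 2 - (j : ℝ) ^ 2)| / ((i : ℝ) ^ 2 + (j : ℝ) ^ 2),
    fun i j => by dsimp only; rw [abs_sub_comm, add_comm]⟩

namespace SimpleGraph

variable [Fintype V] [DecidableEq V] {G : SimpleGraph V} [DecidableRel G.Adj]

variable (G) in
theorem sum_edgeFinset_sym2_sum {M : Type*} [AddCommMonoid M] (f : V → M) :
    ∑ e ∈ G.edgeFinset, Sym2.sum f e = ∑ v, G.degree v • f v := by
  calc ∑ e ∈ G.edgeFinset, Sym2.sum f e
      = ∑ e ∈ G.edgeFinset, ∑ v ∈ univ.filter (· ∈ e), f v := by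
        refine sum_congr rfl fun e he => ?_
        induction e using Sym2.ind with
        | _ u w =>
          have huw : u ≠ w := G.ne_of_adj (G.mem_edgeFinset.mp he)
          rw [show univ.filter (· ∈ s(u, w)) = {u, w} by ext; simp, sum_pair huw]
          rfl
    _ = ∑ v, ∑ e ∈ G.incidenceFinset v, f v := by
        rw [sum_comm']
        intro e v
        simp [incidenceFinset_eq_filter]
    _ = ∑ v, G.degree v • f v := by simp [card_incidenceFinset_eq_degree]

theorem sum_edgeFinset_eq_sum_mij {M : Type*} [AddCommMonoid M]
    (hdeg : ∀ v, G.degree v ∈ Icc 1 4) (g : Sym2 ℕ → M) :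
    ∑ e ∈ G.edgeFinset, g (e.map fun v => G.degree v) =
      mij G 1 1 • g s(1, 1) + mij G 1 2 • g s(1, 2) + mij G 1 3 • g s(1, 3) +
      mij G 1 4 • g s(1, 4) + mij G 2 2 • g s(2, 2) + mij G 2 3 • g s(2, 3) +
      mij G 2 4 • g s(2, 4) + mij G 3 3 • g s(3, 3) + mij G 3 4 • g s(3, 4) +
      mij G 4 4 • g s(4, 4) := by
  have hmaps : ∀ e ∈ G.edgeFinset, (e.map fun v => G.degree v) ∈ molecularDegreePairs := by
    intro e _
    induction e using Sym2.ind with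
    | _ u w => exact mk_mem_molecularDegreePairs (hdeg u) (hdeg w)
  rw [← sum_fiberwise_of_maps_to' hmaps]
  simp [molecularDegreePairs, mij, add_assoc]

theorem card_edgeFinset_eq_sum_mij (hdeg : ∀ v, G.degree v ∈ Icc 1 4) :
    #G.edgeFinset = mij G 1 1 + mij G 1 2 + mij G 1 3 + mij G 1 4 + mij G 2 2 + mij G 2 3 +
      mij G 2 4 + mij G 3 3 + mij G 3 4 + mij G 4 4 := by
  simpa only [card_eq_sum_ones, smul_eq_mul, mul_one] using
    sum_edgeFinset_eq_sum_mij hdeg fun _ => (1 : ℕ)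

variable (G) in
theorem mul_nd_eq_sum_edgeFinset (i : ℕ) :
    i * nd G i = ∑ e ∈ G.edgeFinset,
      Sym2.sum (fun d => if d = i then 1 else 0) (e.map fun v => G.degree v) := by
  simp only [Sym2.sum_map, sum_edgeFinset_sym2_sum, Function.comp_apply, smul_eq_mul, mul_ite,
    mul_one, mul_zero, nd]
  rw [← sum_filter, sum_congr rfl fun v hv => (mem_filter.mp hv).2, sum_const, smul_eq_mul,
    mul_comm]

theorem mul_nd_eq_sum_mij (hdeg : ∀ v, G.degree v ∈ Icc 1 4) :
    nd G 1 = 2 * mij G 1 1 + mij G 1 2 + mij G 1 3 + mij G 1 4 ∧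
    2 * nd G 2 = mij G 1 2 + 2 * mij G 2 2 + mij G 2 3 + mij G 2 4 ∧
    3 * nd G 3 = mij G 1 3 + mij G 2 3 + 2 * mij G 3 3 + mij G 3 4 ∧
    4 * nd G 4 = mij G 1 4 + mij G 2 4 + mij G 3 4 + 2 * mij G 4 4 := by
  have h (i : ℕ) := (G.mul_nd_eq_sum_edgeFinset i).trans (sum_edgeFinset_eq_sum_mij hdeg _)
  refine ⟨?_, ?_, ?_, ?_⟩
  · simpa [mul_comm] using h 1
  · simpa [mul_comm] using h 2
  · simpa [mul_comm] using h 3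
  · simpa [mul_comm] using h 4

theorem card_eq_sum_nd (hdeg : ∀ v, G.degree v ∈ Icc 1 4) :
    Fintype.card V = nd G 1 + nd G 2 + nd G 3 + nd G 4 := by
  rw [← card_univ, card_eq_sum_card_fiberwise fun v _ => hdeg v,
    show Icc 1 4 = {1, 2, 3, 4} by decide]
  simp [nd, add_assoc]

variable (G) in
theorem SO2_eq_sum_sombor2Weight :
    SO2 G = ∑ e ∈ G.edgeFinset, sombor2Weight (e.map fun v => G.degree v) := by
  refine sum_congr rfl fun e _ => ?_
  induction e using Sym2.ind with | _ u w => rfl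

theorem SO2_eq_sum_mij (hdeg : ∀ v, G.degree v ∈ Icc 1 4) :
    SO2 G = 3 / 5 * mij G 1 2 + 4 / 5 * mij G 1 3 + 15 / 17 * mij G 1 4 + 5 / 13 * mij G 2 3 +
      3 / 5 * mij G 2 4 + 7 / 25 * mij G 3 4 := by
  rw [SO2_eq_sum_sombor2Weight, sum_edgeFinset_eq_sum_mij hdeg]
  norm_num [sombor2Weight]
  ring

end SimpleGraph

theorem degree_pair_counts_of_slack_le {m11 m12 m13 m22 m23 m33 m34 m44 : ℕ}
    (h4 : (m11 + m12 + m13 + m22 + m23 + m33 + 3 * m44) % 4 = 2)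
    (h3 : (m13 + m23 + 2 * m33 + m34) % 3 = 0)
    (hslack : 7215 * m11 + 2340 * m12 + 715 * m13 + 4095 * m22 + 1450 * m23 + 3055 * m33 +
      1248 * m34 + 2535 * m44 ≤ 2678) :
    m11 = 0 ∧ m12 = 0 ∧ m13 = 2 ∧ m22 = 0 ∧ m23 = 0 ∧ m33 = 0 ∧ m34 = 1 ∧ m44 = 0 := by
  obtain ⟨rfl, rfl, rfl, h44, h12, h23, h13, h34⟩ :
      m11 = 0 ∧ m22 = 0 ∧ m33 = 0 ∧ m44 ≤ 1 ∧ m12 ≤ 1 ∧ m23 ≤ 1 ∧ m13 ≤ 3 ∧ m34 ≤ 2 := by omega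
  interval_cases m44 <;> interval_cases m12 <;> interval_cases m23 <;> omega

theorem sombor2_count_bound {n m11 m12 m13 m14 m22 m23 m24 m33 m34 m44 n1 n2 n3 n4 : ℕ}
    (hedges : m11 + m12 + m13 + m14 + m22 + m23 + m24 + m33 + m34 + m44 + 1 = n)
    (h1 : n1 = 2 * m11 + m12 + m13 + m14) (h2 : 2 * n2 = m12 + 2 * m22 + m23 + m24)
    (h3 : 3 * n3 = m13 + m23 + 2 * m33 + m34) (h4 : 4 * n4 = m14 + m24 + m34 + 2 * m44)
    (hverts : n = n1 + n2 + n3 + n4) (hmod : n % 4 = 3) :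
    3315 * m12 + 4420 * m13 + 4875 * m14 + 2125 * m23 + 3315 * m24 + 1547 * m34 + 3653 ≤
        4095 * n ∧
      (3315 * m12 + 4420 * m13 + 4875 * m14 + 2125 * m23 + 3315 * m24 + 1547 * m34 + 3653 =
          4095 * n ↔
        m14 = (n - 1) / 2 ∧ m24 = (n - 7) / 2 ∧ m13 = 2 ∧ m34 = 1 ∧ m12 = 0 ∧ m22 = 0 ∧
          m23 = 0 ∧ m33 = 0 ∧ m44 = 0) := by
  have hslack : 3315 * m12 + 4420 * m13 + 4875 * m14 + 2125 * m23 + 3315 * m24 + 1547 * m34 +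
      975 + (7215 * m11 + 2340 * m12 + 715 * m13 + 4095 * m22 + 1450 * m23 + 3055 * m33 +
        1248 * m34 + 2535 * m44) = 4095 * n := by
    omega
  by_cases hsmall : 7215 * m11 + 2340 * m12 + 715 * m13 + 4095 * m22 + 1450 * m23 +
      3055 * m33 + 1248 * m34 + 2535 * m44 ≤ 2678
  · obtain ⟨rfl, rfl, rfl, rfl, rfl, rfl, rfl, rfl⟩ :=
      degree_pair_counts_of_slack_le (by omega) (by omega) hsmall
    omega
  · omega

theorem stmt13_general [Fintype V] [DecidableEq V] (T : SimpleGraph V) [DecidableRel T.Adj]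
    (hT : T.IsTree) (hdeg : ∀ v : V, T.degree v ≤ 4) (n : ℕ) (hn : n = Fintype.card V)
    (hmod : n % 4 = 3) :
    SO2 T ≤ (315 * (n : ℝ) - 281) / 425 ∧
      (SO2 T = (315 * (n : ℝ) - 281) / 425 ↔
        (mij T 1 4 = (n - 1) / 2 ∧ mij T 2 4 = (n - 7) / 2 ∧ mij T 1 3 = 2 ∧ mij T 3 4 = 1 ∧ mij T 1 2 = 0 ∧ mij T 2 2 = 0 ∧ mij T 2 3 = 0 ∧ mij T 3 3 = 0 ∧ mij T 4 4 = 0)) := by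
  have : Nontrivial V := Fintype.one_lt_card_iff_nontrivial.mp (by omega)
  have hdeg_mem (v : V) : T.degree v ∈ Icc 1 4 :=
    mem_Icc.mpr ⟨hT.connected.preconnected.degree_pos_of_nontrivial v, hdeg v⟩
  have hedges := hT.card_edgeFinset
  rw [SimpleGraph.card_edgeFinset_eq_sum_mij hdeg_mem, ← hn] at hedges
  obtain ⟨h1, h2, h3, h4⟩ := SimpleGraph.mul_nd_eq_sum_mij hdeg_mem
  obtain ⟨hle, hiff⟩ :=
    sombor2_count_bound hedges h1 h2 h3 h4 (hn.trans (SimpleGraph.card_eq_sum_nd hdeg_mem)) hmod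
  rify at hle
  rw [SimpleGraph.SO2_eq_sum_mij hdeg_mem, ← hiff, ← Nat.cast_inj (R := ℝ)]
  push_cast
  exact ⟨by linarith, by constructor <;> intro h <;> linarith⟩

theorem stmt13 [Fintype V] [DecidableEq V] (T : SimpleGraph V) [DecidableRel T.Adj]
    (hT : T.IsTree) (hdeg : ∀ v : V, T.degree v ≤ 4) (n : ℕ) (hn : n = Fintype.card V)
    (h5 : 5 ≤ n) (hmod : n % 4 = 3) :
    SO2 T ≤ (315 * (n : ℝ) - 281) / 425 ∧
      (SO2 T = (315 * (n : ℝ) - 281) / 425 ↔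
        (mij T 1 4 = (n - 1) / 2 ∧ mij T 2 4 = (n - 7) / 2 ∧ mij T 1 3 = 2 ∧ mij T 3 4 = 1 ∧ mij T 1 2 = 0 ∧ mij T 2 2 = 0 ∧ mij T 2 3 = 0 ∧ mij T 3 3 = 0 ∧ mij T 4 4 = 0)) :=
  stmt13_general T hT hdeg n hn hmod
end
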